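/- Let M₀ be a solution-separable DSMDP with finite |A₀| > 1, M₊ any macroaction augmentation of M₀, p a distribution over solvable states, and 0 < δ < 1. Then J_explore(M₊; p, δ) / J_explore(M₀; p, δ) ≥ (H[p] − log((1−δ)/δ)) / (E_{s∼p}[d₀(s)] · log(|A₀|/(1−δ))). -/

import Mathlib

def IsSol {S A : Type*} (T : S → A → S) (g : S) (s : S) (σ : List A) : Prop :=
  σ ≠ [] ∧ σ.foldl T s = g ∧ ∀ k < σ.length, (σ.take k).foldl T s ≠ g

noncomputable def dmin {S A : Type*} (T : S → A → S) (g : S) (s : S) : ℕ :=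
  sInf {l : ℕ | ∃ σ : List A, IsSol T g s σ ∧ σ.length = l}

/-- A solution in the macroaction augmentation (`μ a` is the fixed base-action
sequence of action `a`): a nonempty augmented sequence whose expansion solves `s`. -/
def IsSolMacro {S A0 Ap : Type*} (T0 : S → A0 → S) (g : S) (μ : Ap → List A0)
    (s : S) (σ : List Ap) : Prop :=
  σ ≠ [] ∧ IsSol T0 g s (σ.flatMap μ)

private lemma card_filter_length_le {A : Type*} [Fintype A] [Nonempty A]
    (F : Finset (List A)) (n : ℕ) :
    (F.filter (fun σ => σ.length = n)).card ≤ Fintype.card A ^ n := by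
  classical
  have d : A := Classical.arbitrary A
  have h : (F.filter (fun σ => σ.length = n)).card ≤ (Finset.univ : Finset (Fin n → A)).card := by
    apply Finset.card_le_card_of_injOn (fun σ : List A => fun j : Fin n => σ.getD j d)
      (fun _ _ => Finset.mem_univ _)
    intro σ hσ τ hτ hfe
    have hσl : σ.length = n := (Finset.mem_filter.1 hσ).2
    have hτl : τ.length = n := (Finset.mem_filter.1 hτ).2
    apply List.ext_getElem (hσl.trans hτl.symm)
    intro j h1 h2
    have := congrFun hfe ⟨j, hσl ▸ h1⟩
    simpa [List.getD_eq_getElem, h1, h2] using this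
  simpa [Fintype.card_fun] using h

private lemma sum_pow_length_le {A : Type*} [Fintype A] [Nonempty A]
    {r c : ℝ} (hr : 0 ≤ r) (hc : (Fintype.card A : ℝ) * r = c) (hc1 : c < 1)
    (F : Finset (List A)) :
    ∑ σ ∈ F, r ^ σ.length ≤ (1 - c)⁻¹ := by
  classical
  have hc0 : 0 ≤ c := hc ▸ mul_nonneg (Nat.cast_nonneg _) hr
  set N := F.sup List.length with hN
  have hmaps : ∀ σ ∈ F, σ.length ∈ Finset.range (N + 1) :=
    fun σ h => Finset.mem_range.2 (Nat.lt_succ_of_le (Finset.le_sup h))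
  calc ∑ σ ∈ F, r ^ σ.length
      = ∑ n ∈ Finset.range (N + 1), ∑ σ ∈ F.filter (fun σ => σ.length = n), r ^ σ.length :=
        (Finset.sum_fiberwise_of_maps_to hmaps _).symm
    _ ≤ ∑ n ∈ Finset.range (N + 1), c ^ n := by
        apply Finset.sum_le_sum
        intro n _
        have h1 : ∑ σ ∈ F.filter (fun σ => σ.length = n), r ^ σ.length
            = ((F.filter (fun σ => σ.length = n)).card : ℝ) * r ^ n := by
          rw [Finset.sum_congr rfl (fun σ hσ => by rw [(Finset.mem_filter.1 hσ).2]),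
            Finset.sum_const, nsmul_eq_mul]
        rw [h1]
        calc ((F.filter (fun σ => σ.length = n)).card : ℝ) * r ^ n
            ≤ ((Fintype.card A ^ n : ℕ) : ℝ) * r ^ n :=
              mul_le_mul_of_nonneg_right (by exact_mod_cast card_filter_length_le F n)
                (pow_nonneg hr n)
          _ = c ^ n := by push_cast; rw [← mul_pow, hc]
    _ ≤ (1 - c)⁻¹ := by
        have hs := summable_geometric_of_lt_one hc0 hc1
        have := Summable.sum_le_tsum (Finset.range (N + 1)) (fun i _ => pow_nonneg hc0 i) hs
        rwa [tsum_geometric_of_lt_one hc0 hc1] at this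

private lemma summable_pow_length {A : Type*} [Fintype A] [Nonempty A]
    {r : ℝ} (hr : 0 ≤ r) (h1 : (Fintype.card A : ℝ) * r < 1) :
    Summable (fun σ : List A => r ^ σ.length) :=
  summable_of_sum_le (fun _ => pow_nonneg hr _)
    (fun F => sum_pow_length_le hr rfl h1 F)

private lemma sum_pow_length_ne_nil_le {A : Type*} [Fintype A] [Nonempty A]
    {r c : ℝ} (hr : 0 ≤ r) (hc : (Fintype.card A : ℝ) * r = c) (hc1 : c < 1)
    (F : Finset (List A)) (hF : ∀ σ ∈ F, σ ≠ []) :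
    ∑ σ ∈ F, r ^ σ.length ≤ c * (1 - c)⁻¹ := by
  classical
  have hc0 : 0 ≤ c := hc ▸ mul_nonneg (Nat.cast_nonneg _) hr
  set N := F.sup List.length with hN
  have hmaps : ∀ σ ∈ F, σ.length ∈ Finset.range (N + 1) :=
    fun σ h => Finset.mem_range.2 (Nat.lt_succ_of_le (Finset.le_sup h))
  have step : ∀ n ∈ Finset.range (N + 1),
      ∑ σ ∈ F.filter (fun σ => σ.length = n), r ^ σ.length
        ≤ (if n = 0 then 0 else c ^ n) := by
    intro n _
    by_cases hn : n = 0
    · subst hn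
      have : F.filter (fun σ => σ.length = 0) = ∅ := by
        apply Finset.filter_false_of_mem
        intro σ hσ
        simpa [List.length_eq_zero_iff] using hF σ hσ
      rw [this]
      simp
    · simp only [if_neg hn]
      have h1 : ∑ σ ∈ F.filter (fun σ => σ.length = n), r ^ σ.length
          = ((F.filter (fun σ => σ.length = n)).card : ℝ) * r ^ n := by
        rw [Finset.sum_congr rfl (fun σ hσ => by rw [(Finset.mem_filter.1 hσ).2]),
          Finset.sum_const, nsmul_eq_mul]
      rw [h1]
      calc ((F.filter (fun σ => σ.length = n)).card : ℝ) * r ^ n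
          ≤ ((Fintype.card A ^ n : ℕ) : ℝ) * r ^ n :=
            mul_le_mul_of_nonneg_right (by exact_mod_cast card_filter_length_le F n)
              (pow_nonneg hr n)
        _ = c ^ n := by push_cast; rw [← mul_pow, hc]
  calc ∑ σ ∈ F, r ^ σ.length
      = ∑ n ∈ Finset.range (N + 1), ∑ σ ∈ F.filter (fun σ => σ.length = n), r ^ σ.length :=
        (Finset.sum_fiberwise_of_maps_to hmaps _).symm
    _ ≤ ∑ n ∈ Finset.range (N + 1), (if n = 0 then 0 else c ^ n) := Finset.sum_le_sum step
    _ = ∑ n ∈ Finset.range N, (if n + 1 = 0 then 0 else c ^ (n + 1)) := by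
        rw [Finset.sum_range_succ']; simp
    _ ≤ ∑ n ∈ Finset.range N, c * c ^ n := by
        apply Finset.sum_le_sum; intro n _; simp [pow_succ, mul_comm]
    _ = c * ∑ n ∈ Finset.range N, c ^ n := by rw [Finset.mul_sum]
    _ ≤ c * (1 - c)⁻¹ := by
        apply mul_le_mul_of_nonneg_left _ hc0
        have hs := summable_geometric_of_lt_one hc0 hc1
        have := Summable.sum_le_tsum (Finset.range N) (fun i _ => pow_nonneg hc0 i) hs
        rwa [tsum_geometric_of_lt_one hc0 hc1] at this

private lemma kraft_finset {A : Type*} [Fintype A] [Nonempty A] {P : Set (List A)}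
    (hne : ∀ σ ∈ P, σ ≠ [])
    (hpf : ∀ σ ∈ P, ∀ τ ∈ P, σ <+: τ → σ = τ)
    {x : ℝ} (hx0 : 0 ≤ x) (hx1 : x ≤ 1)
    (F : Finset (List A)) (hFP : ∀ σ ∈ F, σ ∈ P) :
    ∑ σ ∈ F, (x / (Fintype.card A : ℝ)) ^ σ.length ≤ x := by
  classical
  set m := Fintype.card A with hm
  have hm0 : 0 < m := Fintype.card_pos
  have hmR : (0 : ℝ) < (m : ℝ) := by exact_mod_cast hm0
  set N := F.sup List.length with hN
  let L : ℕ → Finset (List A) := fun k => (Finset.univ : Finset (Fin k → A)).image List.ofFn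
  have hLmem : ∀ k (l : List A), l ∈ L k ↔ l.length = k := by
    intro k l
    constructor
    · rintro h
      obtain ⟨f, -, rfl⟩ := Finset.mem_image.1 h
      simp
    · intro h
      apply Finset.mem_image.2
      refine ⟨fun j : Fin k => l.get (Fin.cast h.symm j), Finset.mem_univ _, ?_⟩
      subst h
      simpa using List.ofFn_get l
  have hLcard : ∀ k, (L k).card = m ^ k := by
    intro k
    rw [Finset.card_image_of_injective _ List.ofFn_injective]
    simp [Fintype.card_fun, hm]
  let E : List A → Finset (List A) := fun σ => (L (N - σ.length)).image (fun t => σ ++ t)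
  have hEcard : ∀ σ, (E σ).card = m ^ (N - σ.length) := by
    intro σ
    rw [Finset.card_image_of_injective _ (fun a b h => by simpa using h), hLcard]
  have hEpre : ∀ σ l, l ∈ E σ → σ <+: l := by
    intro σ l hl
    obtain ⟨t, -, rfl⟩ := Finset.mem_image.1 hl
    exact ⟨t, rfl⟩
  have hEsub : ∀ σ ∈ F, E σ ⊆ L N := by
    intro σ hσ l hl
    obtain ⟨t, ht, rfl⟩ := Finset.mem_image.1 hl
    rw [hLmem]
    rw [List.length_append, (hLmem _ t).1 ht]
    have : σ.length ≤ N := Finset.le_sup hσ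
    omega
  have hdisj : ∀ σ ∈ F, ∀ τ ∈ F, σ ≠ τ → Disjoint (E σ) (E τ) := by
    intro σ hσ τ hτ hst
    rw [Finset.disjoint_left]
    intro l hlσ hlτ
    have h1 := hEpre σ l hlσ
    have h2 := hEpre τ l hlτ
    rcases List.prefix_or_prefix_of_prefix h1 h2 with h | h
    · exact hst (hpf σ (hFP σ hσ) τ (hFP τ hτ) h)
    · exact hst (hpf τ (hFP τ hτ) σ (hFP σ hσ) h).symm
  have hcount : ∑ σ ∈ F, (m : ℕ) ^ (N - σ.length) ≤ m ^ N := by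
    calc ∑ σ ∈ F, m ^ (N - σ.length) = ∑ σ ∈ F, (E σ).card := by
          exact Finset.sum_congr rfl (fun σ _ => (hEcard σ).symm)
      _ = (F.biUnion E).card := (Finset.card_biUnion hdisj).symm
      _ ≤ (L N).card := Finset.card_le_card (by
          intro l hl
          obtain ⟨σ, hσ, hlσ⟩ := Finset.mem_biUnion.1 hl
          exact hEsub σ hσ hlσ)
      _ = m ^ N := hLcard N
  have hcountR : ∑ σ ∈ F, ((m : ℝ)) ^ (N - σ.length) ≤ (m : ℝ) ^ N := by
    exact_mod_cast hcount
  have hNpos : (0 : ℝ) < (m : ℝ) ^ N := pow_pos hmR _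
  have key : ∀ σ ∈ F, (x / (m : ℝ)) ^ σ.length
      ≤ x * ((m : ℝ) ^ (N - σ.length) / (m : ℝ) ^ N) := by
    intro σ hσ
    have hlen : σ.length ≤ N := Finset.le_sup hσ
    have hne' : σ ≠ [] := hne σ (hFP σ hσ)
    have hl1 : σ.length ≠ 0 := by
      have := List.length_pos_iff.2 hne'; omega
    have hmpow : (0 : ℝ) < (m : ℝ) ^ σ.length := pow_pos hmR _
    have h1 : (m : ℝ) ^ (N - σ.length) / (m : ℝ) ^ N = ((m : ℝ) ^ σ.length)⁻¹ := by
      rw [div_eq_iff (ne_of_gt hNpos), inv_mul_eq_div, eq_div_iff (ne_of_gt hmpow),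
        ← pow_add]
      congr 1
      omega
    rw [h1, div_pow]
    rw [div_eq_mul_inv]
    exact mul_le_mul_of_nonneg_right (pow_le_of_le_one hx0 hx1 hl1)
      (inv_nonneg.2 (le_of_lt hmpow))
  calc ∑ σ ∈ F, (x / (m : ℝ)) ^ σ.length
      ≤ ∑ σ ∈ F, x * ((m : ℝ) ^ (N - σ.length) / (m : ℝ) ^ N) := Finset.sum_le_sum key
    _ = x * ((∑ σ ∈ F, (m : ℝ) ^ (N - σ.length)) / (m : ℝ) ^ N) := by
        rw [← Finset.mul_sum, ← Finset.sum_div]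
    _ ≤ x * 1 := mul_le_mul_of_nonneg_left ((div_le_one hNpos).2 hcountR) hx0
    _ = x := mul_one x

private lemma kraft_tsum {A : Type*} [Fintype A] [Nonempty A] {P : Set (List A)}
    (hne : ∀ σ ∈ P, σ ≠ [])
    (hpf : ∀ σ ∈ P, ∀ τ ∈ P, σ <+: τ → σ = τ)
    {x : ℝ} (hx0 : 0 ≤ x) (hx1 : x < 1) :
    ∑' σ : P, (x / (Fintype.card A : ℝ)) ^ (σ : List A).length ≤ x := by
  classical
  have hmR : (0 : ℝ) < (Fintype.card A : ℝ) := by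
    exact_mod_cast (Fintype.card_pos : 0 < Fintype.card A)
  have hr0 : 0 ≤ x / (Fintype.card A : ℝ) := div_nonneg hx0 (le_of_lt hmR)
  have hmr : (Fintype.card A : ℝ) * (x / (Fintype.card A : ℝ)) = x :=
    mul_div_cancel₀ x (ne_of_gt hmR)
  have hsum : Summable (fun σ : P => (x / (Fintype.card A : ℝ)) ^ (σ : List A).length) :=
    (summable_pow_length hr0 (by rw [hmr]; exact hx1)).subtype _
  apply Summable.tsum_le_of_sum_le hsum
  intro u
  have : ∑ σ ∈ u, (x / (Fintype.card A : ℝ)) ^ (σ : List A).length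
      = ∑ l ∈ u.image (Subtype.val), (x / (Fintype.card A : ℝ)) ^ l.length := by
    rw [Finset.sum_image (fun a _ b _ h => Subtype.ext h)]
  rw [this]
  exact kraft_finset hne hpf hx0 (le_of_lt hx1) _
    (fun l hl => by
      obtain ⟨σ, -, rfl⟩ := Finset.mem_image.1 hl
      exact σ.2)

/-- Corollary 5.4: for a macroaction augmentation of a solution-separable DSMDP,
`J_explore(M₊;p,δ)/J_explore(M₀;p,δ) ≥ (H[p] − log((1−δ)/δ)) / (E_{s∼p}[d₀(s)] log(|A₀|/(1−δ)))`. -/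
theorem stmt9 {S A0 Ap : Type*} [Fintype S] [Fintype A0] [Fintype Ap]
    (T0 : S → A0 → S) (g : S) (hA0 : 1 < Fintype.card A0)
    (hsep : ∀ (σ : List A0) (s s' : S), IsSol T0 g s σ → IsSol T0 g s' σ → s = s')
    (μ : Ap → List A0) (i : A0 → Ap) (hi : Function.Injective i)
    (hbase : ∀ a : A0, μ (i a) = [a])
    (hmacro : ∀ a : Ap, a ∉ Set.range i → 1 < (μ a).length)
    (δ : ℝ) (hδ0 : 0 < δ) (hδ1 : δ < 1)
    (p : S → ℝ) (hp0 : ∀ s, 0 ≤ p s) (hp1 : ∑ s, p s = 1)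
    (hsupp : ∀ s, p s ≠ 0 → ∃ σ : List A0, IsSol T0 g s σ) :
    let q0 : S → ℝ := fun s => ∑' σ : {σ : List A0 // IsSol T0 g s σ},
      ((1 - δ) / (Fintype.card A0 : ℝ)) ^ σ.1.length
    let qp : S → ℝ := fun s => ∑' σ : {σ : List Ap // IsSolMacro T0 g μ s σ},
      ((1 - δ) / (Fintype.card Ap : ℝ)) ^ σ.1.length
    (∑ s, p s * (-Real.log (qp s))) / (∑ s, p s * (-Real.log (q0 s)))
      ≥ ((∑ s, Real.negMulLog (p s)) - Real.log ((1 - δ) / δ)) /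
        ((∑ s, p s * (dmin T0 g s : ℝ)) * Real.log ((Fintype.card A0 : ℝ) / (1 - δ))) := by
  classical
  intro q0 qp
  haveI hne0 : Nonempty A0 := Fintype.card_pos_iff.1 (by omega)
  have hmple : Fintype.card A0 ≤ Fintype.card Ap := Fintype.card_le_of_injective i hi
  haveI hnep : Nonempty Ap := Fintype.card_pos_iff.1 (by omega)
  have hδ' : (0 : ℝ) < 1 - δ := by linarith
  have h1δle : (1 : ℝ) - δ < 1 := by linarith
  have hm0R : (0 : ℝ) < (Fintype.card A0 : ℝ) := by
    exact_mod_cast (Fintype.card_pos : 0 < Fintype.card A0)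
  have hmpR : (0 : ℝ) < (Fintype.card Ap : ℝ) := by
    exact_mod_cast (Fintype.card_pos : 0 < Fintype.card Ap)
  have hr00 : (0 : ℝ) ≤ (1 - δ) / (Fintype.card A0 : ℝ) := div_nonneg hδ'.le hm0R.le
  have hr0pos : (0 : ℝ) < (1 - δ) / (Fintype.card A0 : ℝ) := div_pos hδ' hm0R
  have hrp0 : (0 : ℝ) ≤ (1 - δ) / (Fintype.card Ap : ℝ) := div_nonneg hδ'.le hmpR.le
  have hrppos : (0 : ℝ) < (1 - δ) / (Fintype.card Ap : ℝ) := div_pos hδ' hmpR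
  have hc0 : (Fintype.card A0 : ℝ) * ((1 - δ) / (Fintype.card A0 : ℝ)) = 1 - δ :=
    mul_div_cancel₀ _ (ne_of_gt hm0R)
  have hcp : (Fintype.card Ap : ℝ) * ((1 - δ) / (Fintype.card Ap : ℝ)) = 1 - δ :=
    mul_div_cancel₀ _ (ne_of_gt hmpR)
  have hc0lt : (Fintype.card A0 : ℝ) * ((1 - δ) / (Fintype.card A0 : ℝ)) < 1 := by
    rw [hc0]; linarith
  have hcplt : (Fintype.card Ap : ℝ) * ((1 - δ) / (Fintype.card Ap : ℝ)) < 1 := by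
    rw [hcp]; linarith
  -- basic facts about μ
  have μne : ∀ a : Ap, μ a ≠ [] := by
    intro a
    by_cases h : a ∈ Set.range i
    · obtain ⟨b, rfl⟩ := h; rw [hbase]; simp
    · have := hmacro a h; intro he; rw [he] at this; simp at this
  -- prefix-freeness
  have pf0 : ∀ s : S, ∀ σ ∈ {σ : List A0 | IsSol T0 g s σ},
      ∀ τ ∈ {σ : List A0 | IsSol T0 g s σ}, σ <+: τ → σ = τ := by
    intro s σ hσ τ hτ hpre
    by_contra hnee
    have hlt : σ.length < τ.length := by
      rcases lt_or_eq_of_le hpre.length_le with h | h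
      · exact h
      · exact absurd (List.prefix_iff_eq_take.1 hpre ▸ (by rw [h, List.take_length])) hnee
    have h2 := hτ.2.2 σ.length hlt
    have h3 : τ.take σ.length = σ := (List.prefix_iff_eq_take.1 hpre).symm
    exact h2 (by rw [h3]; exact hσ.2.1)
  have pfP : ∀ s : S, ∀ σ ∈ {σ : List Ap | IsSolMacro T0 g μ s σ},
      ∀ τ ∈ {σ : List Ap | IsSolMacro T0 g μ s σ}, σ <+: τ → σ = τ := by
    intro s σ hσ τ hτ hpre
    obtain ⟨ρ, rfl⟩ := hpre
    by_contra hnee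
    have hρ : ρ ≠ [] := by rintro rfl; simp at hnee
    have hflat : ρ.flatMap μ ≠ [] := by
      cases ρ with
      | nil => exact absurd rfl hρ
      | cons a t =>
          rw [List.flatMap_cons]
          exact List.append_ne_nil_of_left_ne_nil (μne a) _
    have h1 : (σ.flatMap μ).length < ((σ ++ ρ).flatMap μ).length := by
      rw [List.flatMap_append, List.length_append]
      have := List.length_pos_iff.2 hflat
      omega
    have h2 := hτ.2.2.2 (σ.flatMap μ).length h1
    have h3 : ((σ ++ ρ).flatMap μ).take (σ.flatMap μ).length = σ.flatMap μ := by
      rw [List.flatMap_append, List.take_left]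
    exact h2 (by rw [h3]; exact hσ.2.2.1)
  have mapSol : ∀ (s : S) (σ : List A0), IsSol T0 g s σ → IsSolMacro T0 g μ s (σ.map i) := by
    intro s σ hσ
    have hflat : (σ.map i).flatMap μ = σ := by
      rw [List.flatMap_map]
      simp only [hbase]
      exact List.flatMap_singleton' σ
    exact ⟨by simpa using hσ.1, by rw [hflat]; exact hσ⟩
  -- summability
  have sumQ0 : ∀ s : S, Summable (fun σ : {σ : List A0 // IsSol T0 g s σ} =>
      ((1 - δ) / (Fintype.card A0 : ℝ)) ^ σ.1.length) := fun s =>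
    (summable_pow_length hr00 hc0lt).subtype {σ : List A0 | IsSol T0 g s σ}
  have sumQp : ∀ s : S, Summable (fun σ : {σ : List Ap // IsSolMacro T0 g μ s σ} =>
      ((1 - δ) / (Fintype.card Ap : ℝ)) ^ σ.1.length) := fun s =>
    (summable_pow_length hrp0 hcplt).subtype {σ : List Ap | IsSolMacro T0 g μ s σ}
  -- Kraft upper bounds
  have q0le : ∀ s, q0 s ≤ 1 - δ := fun s =>
    kraft_tsum (fun σ hσ => hσ.1) (pf0 s) hδ'.le h1δle
  have qple : ∀ s, qp s ≤ 1 - δ := fun s =>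
    kraft_tsum (fun σ hσ => hσ.1) (pfP s) hδ'.le h1δle
  -- positivity on support
  have q0pos : ∀ s, p s ≠ 0 → 0 < q0 s := by
    intro s hs
    obtain ⟨σ, hσ⟩ := hsupp s hs
    have h := Summable.le_tsum (sumQ0 s) ⟨σ, hσ⟩ (fun j _ => pow_nonneg hr00 _)
    exact lt_of_lt_of_le (pow_pos hr0pos _) h
  have qppos : ∀ s, p s ≠ 0 → 0 < qp s := by
    intro s hs
    obtain ⟨σ, hσ⟩ := hsupp s hs
    have h := Summable.le_tsum (sumQp s) ⟨σ.map i, mapSol s σ hσ⟩ (fun j _ => pow_nonneg hrp0 _)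
    exact lt_of_lt_of_le (pow_pos hrppos _) h
  have hlog1δ : Real.log (1 - δ) < 0 := Real.log_neg hδ' h1δle
  have nlogq0 : ∀ s, p s ≠ 0 → -Real.log (1 - δ) ≤ -Real.log (q0 s) :=
    fun s hs => neg_le_neg (Real.log_le_log (q0pos s hs) (q0le s))
  have nlogqp : ∀ s, p s ≠ 0 → -Real.log (1 - δ) ≤ -Real.log (qp s) :=
    fun s hs => neg_le_neg (Real.log_le_log (qppos s hs) (qple s))
  -- the support
  set U : Finset S := Finset.univ.filter (fun s => p s ≠ 0) with hU
  have hmemU : ∀ s, s ∈ U ↔ p s ≠ 0 := by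
    intro s; rw [hU, Finset.mem_filter]; simp
  have hpU : ∑ s ∈ U, p s = 1 := by
    rw [hU, Finset.sum_filter_ne_zero]; exact hp1
  have hUne : U.Nonempty := by
    rcases Finset.eq_empty_or_nonempty U with h | h
    · rw [h, Finset.sum_empty] at hpU; norm_num at hpU
    · exact h
  have hppos : ∀ s ∈ U, 0 < p s := fun s hs => (hp0 s).lt_of_ne (Ne.symm ((hmemU s).1 hs))
  -- restriction of the four sums to U
  have hNsum : ∑ s ∈ U, p s * (-Real.log (qp s)) = ∑ s, p s * (-Real.log (qp s)) := by
    rw [hU]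
    exact Finset.sum_filter_of_ne (fun s _ hf hps => hf (by rw [hps, zero_mul]))
  have hDsum : ∑ s ∈ U, p s * (-Real.log (q0 s)) = ∑ s, p s * (-Real.log (q0 s)) := by
    rw [hU]
    exact Finset.sum_filter_of_ne (fun s _ hf hps => hf (by rw [hps, zero_mul]))
  have hHsum : ∑ s ∈ U, Real.negMulLog (p s) = ∑ s, Real.negMulLog (p s) := by
    rw [hU]
    exact Finset.sum_filter_of_ne (fun s _ hf hps => hf (by rw [hps, Real.negMulLog_zero]))
  have hdsum : ∑ s ∈ U, p s * (dmin T0 g s : ℝ) = ∑ s, p s * (dmin T0 g s : ℝ) := by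
    rw [hU]
    exact Finset.sum_filter_of_ne (fun s _ hf hps => hf (by rw [hps, zero_mul]))
  -- Q and its bounds
  set Q : ℝ := ∑ s ∈ U, qp s with hQ
  have hQpos : 0 < Q := Finset.sum_pos (fun s hs => qppos s ((hmemU s).1 hs)) hUne
  have hQle : Q ≤ (1 - δ) / δ := by
    have hsummaj : Summable (fun σ : List Ap =>
        ((1 - δ) / (Fintype.card Ap : ℝ)) ^ σ.length) := summable_pow_length hrp0 hcplt
    have hind : ∀ s ∈ U, Summable (fun σ : List Ap =>
        Set.indicator {σ : List Ap | IsSolMacro T0 g μ s σ}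
          (fun σ => ((1 - δ) / (Fintype.card Ap : ℝ)) ^ σ.length) σ) :=
      fun s _ => hsummaj.indicator _
    have h1 : Q = ∑' σ : List Ap, ∑ s ∈ U,
        Set.indicator {σ : List Ap | IsSolMacro T0 g μ s σ}
          (fun σ => ((1 - δ) / (Fintype.card Ap : ℝ)) ^ σ.length) σ := by
      rw [Summable.tsum_finsetSum hind]
      apply Finset.sum_congr rfl
      intro s _
      exact tsum_subtype {σ : List Ap | IsSolMacro T0 g μ s σ}
        (fun σ => ((1 - δ) / (Fintype.card Ap : ℝ)) ^ σ.length)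
    have hgsum : Summable (fun σ : List Ap =>
        if σ ≠ [] then ((1 - δ) / (Fintype.card Ap : ℝ)) ^ σ.length else 0) := by
      apply Summable.of_nonneg_of_le _ _ hsummaj
      · intro σ
        by_cases h : σ ≠ [] <;> simp [h, pow_nonneg hrp0]
      · intro σ
        by_cases h : σ ≠ [] <;> simp [h, pow_nonneg hrp0]
    have h2 : ∀ σ : List Ap, ∑ s ∈ U,
        Set.indicator {σ : List Ap | IsSolMacro T0 g μ s σ}
          (fun σ => ((1 - δ) / (Fintype.card Ap : ℝ)) ^ σ.length) σ
        ≤ (if σ ≠ [] then ((1 - δ) / (Fintype.card Ap : ℝ)) ^ σ.length else 0) := by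
      intro σ
      by_cases hσe : σ = []
      · subst hσe
        have : ∀ s ∈ U, Set.indicator {σ : List Ap | IsSolMacro T0 g μ s σ}
            (fun σ => ((1 - δ) / (Fintype.card Ap : ℝ)) ^ σ.length) ([] : List Ap) = 0 := by
          intro s _
          apply Set.indicator_of_notMem
          intro h
          exact h.1 rfl
        rw [Finset.sum_congr rfl this, Finset.sum_const, smul_zero]
        simp
      · simp only [if_pos hσe]
        by_cases hex : ∃ s ∈ U, IsSolMacro T0 g μ s σ
        · obtain ⟨s0, hs0U, hs0⟩ := hex
          rw [Finset.sum_eq_single_of_mem s0 hs0U]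
          · exact le_of_eq (Set.indicator_of_mem
              (show σ ∈ {σ : List Ap | IsSolMacro T0 g μ s0 σ} from hs0) _)
          · intro s hs hss0
            apply Set.indicator_of_notMem
            intro h
            exact hss0 (hsep (σ.flatMap μ) s s0 h.2 hs0.2)
        · have : ∀ s ∈ U, Set.indicator {σ : List Ap | IsSolMacro T0 g μ s σ}
              (fun σ => ((1 - δ) / (Fintype.card Ap : ℝ)) ^ σ.length) σ = 0 := by
            intro s hs
            apply Set.indicator_of_notMem
            intro h
            exact hex ⟨s, hs, h⟩
          rw [Finset.sum_congr rfl this, Finset.sum_const, smul_zero]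
          exact pow_nonneg hrp0 _
    have h4 : ∑' σ : List Ap,
        (if σ ≠ [] then ((1 - δ) / (Fintype.card Ap : ℝ)) ^ σ.length else 0)
        ≤ (1 - δ) * (1 - (1 - δ))⁻¹ := by
      apply Summable.tsum_le_of_sum_le hgsum
      intro F
      rw [← Finset.sum_filter]
      exact sum_pow_length_ne_nil_le hrp0 hcp h1δle (F.filter (fun σ => σ ≠ []))
        (fun σ hσ => (Finset.mem_filter.1 hσ).2)
    have h5 : (1 - δ) * (1 - (1 - δ))⁻¹ = (1 - δ) / δ := by
      rw [div_eq_mul_inv]; ring_nf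
    rw [h1]
    calc ∑' σ : List Ap, ∑ s ∈ U, _ ≤ _ := Summable.tsum_le_tsum h2 (summable_sum hind) hgsum
      _ ≤ (1 - δ) * (1 - (1 - δ))⁻¹ := h4
      _ = (1 - δ) / δ := h5
  -- Gibbs' inequality
  have gibbs : ∑ s ∈ U, p s * Real.log (qp s) - ∑ s ∈ U, p s * Real.log (p s)
      ≤ Real.log Q := by
    have key : ∑ s ∈ U, p s * Real.log (qp s / (p s * Q)) ≤ 0 := by
      calc ∑ s ∈ U, p s * Real.log (qp s / (p s * Q))
          ≤ ∑ s ∈ U, p s * (qp s / (p s * Q) - 1) := by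
            apply Finset.sum_le_sum
            intro s hs
            exact mul_le_mul_of_nonneg_left
              (Real.log_le_sub_one_of_pos
                (div_pos (qppos s ((hmemU s).1 hs)) (mul_pos (hppos s hs) hQpos)))
              (hp0 s)
        _ = ∑ s ∈ U, (qp s / Q - p s) := by
            apply Finset.sum_congr rfl
            intro s hs
            have hps : p s ≠ 0 := (hmemU s).1 hs
            field_simp
        _ = (∑ s ∈ U, qp s) / Q - ∑ s ∈ U, p s := by
            rw [Finset.sum_sub_distrib, Finset.sum_div]
        _ = 0 := by
            rw [← hQ, hpU, div_self (ne_of_gt hQpos)]; ring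
    have expand : ∀ s ∈ U, p s * Real.log (qp s / (p s * Q))
        = p s * Real.log (qp s) - p s * Real.log (p s) - p s * Real.log Q := by
      intro s hs
      rw [Real.log_div (ne_of_gt (qppos s ((hmemU s).1 hs)))
          (ne_of_gt (mul_pos (hppos s hs) hQpos)),
        Real.log_mul ((hmemU s).1 hs) (ne_of_gt hQpos)]
      ring
    have e1 : ∑ s ∈ U, p s * Real.log (qp s / (p s * Q))
        = ∑ s ∈ U, p s * Real.log (qp s) - ∑ s ∈ U, p s * Real.log (p s) - Real.log Q := by
      rw [Finset.sum_congr rfl expand, Finset.sum_sub_distrib, Finset.sum_sub_distrib,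
        ← Finset.sum_mul, hpU, one_mul]
    have h6 := e1 ▸ key
    linarith [h6]
  -- numerator lower bound
  have hNlow : (∑ s, Real.negMulLog (p s)) - Real.log ((1 - δ) / δ)
      ≤ ∑ s, p s * (-Real.log (qp s)) := by
    rw [← hNsum, ← hHsum]
    have e2 : ∑ s ∈ U, p s * (-Real.log (qp s)) = -(∑ s ∈ U, p s * Real.log (qp s)) := by
      rw [← Finset.sum_neg_distrib]
      exact Finset.sum_congr rfl (fun s _ => by ring)
    have e3 : ∑ s ∈ U, Real.negMulLog (p s) = -(∑ s ∈ U, p s * Real.log (p s)) := by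
      rw [← Finset.sum_neg_distrib]
      exact Finset.sum_congr rfl (fun s _ => by simp only [Real.negMulLog]; ring)
    have hlogQ : Real.log Q ≤ Real.log ((1 - δ) / δ) := Real.log_le_log hQpos hQle
    rw [e2, e3]
    linarith [gibbs]
  -- numerator nonneg
  have hN0 : 0 ≤ ∑ s, p s * (-Real.log (qp s)) := by
    apply Finset.sum_nonneg
    intro s _
    by_cases hs : p s = 0
    · rw [hs, zero_mul]
    · exact mul_nonneg (hp0 s) (le_trans (by linarith [hlog1δ]) (nlogqp s hs))
  -- denominator positive
  have hDpos : 0 < ∑ s, p s * (-Real.log (q0 s)) := by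
    rw [← hDsum]
    calc (0 : ℝ) < -Real.log (1 - δ) := by linarith [hlog1δ]
      _ = ∑ s ∈ U, p s * (-Real.log (1 - δ)) := by
          rw [← Finset.sum_mul, hpU, one_mul]
      _ ≤ ∑ s ∈ U, p s * (-Real.log (q0 s)) := by
          apply Finset.sum_le_sum
          intro s hs
          exact mul_le_mul_of_nonneg_left (nlogq0 s ((hmemU s).1 hs)) (hp0 s)
  -- the log factor
  have h2m0 : (2 : ℝ) ≤ (Fintype.card A0 : ℝ) := by exact_mod_cast hA0
  have hL : 0 < Real.log ((Fintype.card A0 : ℝ) / (1 - δ)) :=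
    Real.log_pos ((one_lt_div hδ').2 (by linarith))
  -- dmin facts
  have hdminfacts : ∀ s ∈ U, 1 ≤ dmin T0 g s ∧
      ((1 - δ) / (Fintype.card A0 : ℝ)) ^ (dmin T0 g s) ≤ q0 s := by
    intro s hs
    obtain ⟨σ, hσ⟩ := hsupp s ((hmemU s).1 hs)
    have hnonempty : {l : ℕ | ∃ σ : List A0, IsSol T0 g s σ ∧ σ.length = l}.Nonempty :=
      ⟨σ.length, σ, hσ, rfl⟩
    obtain ⟨τ, hτ, hlen⟩ := Nat.sInf_mem hnonempty
    constructor
    · rw [dmin, ← hlen]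
      exact List.length_pos_iff.2 hτ.1
    · have h := Summable.le_tsum (sumQ0 s) ⟨τ, hτ⟩ (fun j _ => pow_nonneg hr00 _)
      rw [dmin, ← hlen]
      exact h
  -- denominator upper bound
  have hDle : ∑ s, p s * (-Real.log (q0 s))
      ≤ (∑ s, p s * (dmin T0 g s : ℝ)) * Real.log ((Fintype.card A0 : ℝ) / (1 - δ)) := by
    rw [← hDsum, ← hdsum, Finset.sum_mul]
    apply Finset.sum_le_sum
    intro s hs
    rw [mul_assoc]
    apply mul_le_mul_of_nonneg_left _ (hp0 s)
    have ⟨hd1, hd2⟩ := hdminfacts s hs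
    have hlog := Real.log_le_log (pow_pos hr0pos _) hd2
    rw [Real.log_pow] at hlog
    have hinv : ((1 - δ) / (Fintype.card A0 : ℝ))⁻¹ = (Fintype.card A0 : ℝ) / (1 - δ) :=
      inv_div _ _
    calc -Real.log (q0 s) ≤ -((dmin T0 g s : ℝ) * Real.log ((1 - δ) / (Fintype.card A0 : ℝ))) := by
          linarith [hlog]
      _ = (dmin T0 g s : ℝ) * Real.log ((Fintype.card A0 : ℝ) / (1 - δ)) := by
          rw [← hinv, Real.log_inv]; ring
  -- denominator upper bound positive
  have hdposU : (1 : ℝ) ≤ ∑ s, p s * (dmin T0 g s : ℝ) := by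
    rw [← hdsum]
    calc (1 : ℝ) = ∑ s ∈ U, p s := hpU.symm
      _ ≤ ∑ s ∈ U, p s * (dmin T0 g s : ℝ) := by
          apply Finset.sum_le_sum
          intro s hs
          have ⟨hd1, _⟩ := hdminfacts s hs
          have : (1 : ℝ) ≤ (dmin T0 g s : ℝ) := by exact_mod_cast hd1
          nlinarith [hp0 s]
  have hDupPos : 0 < (∑ s, p s * (dmin T0 g s : ℝ)) *
      Real.log ((Fintype.card A0 : ℝ) / (1 - δ)) :=
    mul_pos (by linarith) hL
  -- finish
  rw [ge_iff_le]
  rcases le_or_gt ((∑ s, Real.negMulLog (p s)) - Real.log ((1 - δ) / δ)) 0 with hc | hc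
  · exact le_trans (div_nonpos_iff.2 (Or.inr ⟨hc, hDupPos.le⟩)) (div_nonneg hN0 hDpos.le)
  · calc ((∑ s, Real.negMulLog (p s)) - Real.log ((1 - δ) / δ)) /
        ((∑ s, p s * (dmin T0 g s : ℝ)) * Real.log ((Fintype.card A0 : ℝ) / (1 - δ)))
        ≤ ((∑ s, Real.negMulLog (p s)) - Real.log ((1 - δ) / δ)) /
          (∑ s, p s * (-Real.log (q0 s))) :=
          div_le_div_of_nonneg_left hc.le hDpos hDle
      _ ≤ (∑ s, p s * (-Real.log (qp s))) / (∑ s, p s * (-Real.log (q0 s))) := by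
          exact (div_le_div_iff_of_pos_right hDpos).2 hNlow
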